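/- arXiv:2403.15889 — 3 statements merged into one kernel-verified Lean document; each statement's English description precedes it below -/
import Mathlib

section
/- Let 2 ≤ N ≤ q be integers, D > 0 and 0 < δ ≤ 1. Set Γ := δ^{2−N}(N−1)! and ε := (Γ+1)^{−1}δ. Let H_1,…,H_N be distinct m-dimensional closed half-planes in ℝ^{m+n} all having the same (m−1)-dimensional linear subspace V as boundary, and for each i let π_i denote the m-dimensional plane obtained as the union of H_i with its reflection across V. Set ζ := max_{i<j} dist_H(π_i ∩ B̄_1, π_j ∩ B̄_1), where dist_H is Hausdorff distance and B̄_1 is the closed unit ball. If D ≤ ε ζ, then there exists a subset I ⊂ {1,…,N} with #I ≥ 2 such that: (1) max_j min_{i∈I} dist_H(H_i ∩ B̄_1, H_j ∩ B̄_1) ≤ Γ D; (2) D + max_j min_{i∈I} dist_H(H_i ∩ B̄_1, H_j ∩ B̄_1) ≤ δ · min_{i,j∈I, i<j} dist_H(H_i ∩ B̄_1, H_j ∩ B̄_1); (3) max_{i,j∈I, i<j} dist_H(π_i ∩ B̄_1, π_j ∩ B̄_1) = ζ. -/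
open Metric

/-!
Let the maximal plane separation `ζ` be attained by the pair `a, b`. Since `π ∩ B̄₁` is
`H ∩ B̄₁` together with its mirror image across `V`, the half-planes of `a, b` are at least `ζ`
apart. Starting from all indices with covering radius `E = 0`, as long as
`D + E ≤ δ · minSep` fails, discard one member of a closest pair and add their separation `μ`
to `E`. Failure means `δ μ < D + E`, so `D + E` grows by a factor at most `2 / δ` per removal;
while it stays below `δ ζ` the closest pair cannot be `a, b`, so `a, b` survive and `ζ` is kept.
At most `N - 2` removals happen, and `(2 / δ) ^ (N - 2) ≤ Γ` because `2 ^ k ≤ (k + 1)!`.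
-/

/-- Maximal pairwise Hausdorff separation (inside `B`) of the sets `f i`, `i ∈ I`. -/
noncomputable def maxSep {ι : Type*} {α : Type*} [MetricSpace α]
    (B : Set α) (I : Finset ι) (f : ι → Set α) : ℝ :=
  sSup {d : ℝ | ∃ i ∈ I, ∃ j ∈ I, i ≠ j ∧ d = Metric.hausdorffDist (f i ∩ B) (f j ∩ B)}

/-- Minimal pairwise Hausdorff separation (inside `B`) of the sets `f i`, `i ∈ I`. -/
noncomputable def minSep {ι : Type*} {α : Type*} [MetricSpace α]
    (B : Set α) (I : Finset ι) (f : ι → Set α) : ℝ :=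
  sInf {d : ℝ | ∃ i ∈ I, ∃ j ∈ I, i ≠ j ∧ d = Metric.hausdorffDist (f i ∩ B) (f j ∩ B)}

section Separation

variable {ι α : Type*} [MetricSpace α] (B : Set α) (I : Finset ι) (f : ι → Set α)

def sepSet : Set ℝ :=
  {d | ∃ i ∈ I, ∃ j ∈ I, i ≠ j ∧ d = hausdorffDist (f i ∩ B) (f j ∩ B)}

theorem finite_sepSet : (sepSet B I f).Finite := by
  refine (I.offDiag.finite_toSet.image
    fun p : ι × ι => hausdorffDist (f p.1 ∩ B) (f p.2 ∩ B)).subset ?_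
  rintro d ⟨i, hi, j, hj, hij, rfl⟩
  exact ⟨(i, j), Finset.mem_offDiag.2 ⟨hi, hj, hij⟩, rfl⟩

variable {B I f} {a b : ι}

theorem exists_maxSep_eq (ha : a ∈ I) (hb : b ∈ I) (hab : a ≠ b) :
    ∃ i ∈ I, ∃ j ∈ I, i ≠ j ∧ maxSep B I f = hausdorffDist (f i ∩ B) (f j ∩ B) :=
  Set.Nonempty.csSup_mem (s := sepSet B I f) ⟨_, a, ha, b, hb, hab, rfl⟩ (finite_sepSet B I f)

theorem exists_minSep_eq (ha : a ∈ I) (hb : b ∈ I) (hab : a ≠ b) :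
    ∃ i ∈ I, ∃ j ∈ I, i ≠ j ∧ minSep B I f = hausdorffDist (f i ∩ B) (f j ∩ B) :=
  Set.Nonempty.csInf_mem (s := sepSet B I f) ⟨_, a, ha, b, hb, hab, rfl⟩ (finite_sepSet B I f)

theorem hausdorffDist_le_maxSep (ha : a ∈ I) (hb : b ∈ I) (hab : a ≠ b) :
    hausdorffDist (f a ∩ B) (f b ∩ B) ≤ maxSep B I f :=
  le_csSup (finite_sepSet B I f).bddAbove ⟨a, ha, b, hb, hab, rfl⟩

theorem maxSep_le_maxSep_of_subset {J : Finset ι} (hIJ : I ⊆ J) (ha : a ∈ I) (hb : b ∈ I)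
    (hab : a ≠ b) :
    maxSep B I f ≤ maxSep B J f := by
  obtain ⟨i, hi, j, hj, hij, hmax⟩ := exists_maxSep_eq (f := f) (B := B) ha hb hab
  exact hmax ▸ hausdorffDist_le_maxSep (hIJ hi) (hIJ hj) hij

end Separation

section Pruning

variable {ι α : Type*} [MetricSpace α] {B : Set α} {f : ι → Set α}

def IsNet (B : Set α) (f : ι → Set α) (I : Finset ι) (E : ℝ) : Prop :=
  ∀ j, ∃ i ∈ I, hausdorffDist (f i ∩ B) (f j ∩ B) ≤ E

theorem isNet_univ [Fintype ι] : IsNet B f Finset.univ 0 :=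
  fun j => ⟨j, Finset.mem_univ j, (hausdorffDist_self_zero).le⟩

theorem IsNet.nonneg {I : Finset ι} {E : ℝ} (hI : IsNet B f I E) (a : ι) : 0 ≤ E := by
  obtain ⟨i, -, h⟩ := hI a
  exact hausdorffDist_nonneg.trans h

variable [DecidableEq ι]

theorem IsNet.erase {I : Finset ι} {E : ℝ} (hI : IsNet B f I E) {r s : ι}
    (hfin : hausdorffEDist (f s ∩ B) (f r ∩ B) ≠ ⊤) (hs : s ∈ I) (hsr : s ≠ r) :
    IsNet B f (I.erase r) (E + hausdorffDist (f s ∩ B) (f r ∩ B)) := by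
  intro j
  obtain ⟨i, hi, hij⟩ := hI j
  by_cases hir : i = r
  · subst hir
    refine ⟨s, Finset.mem_erase.2 ⟨hsr, hs⟩, ?_⟩
    linarith [hausdorffDist_triangle (u := f j ∩ B) hfin]
  · exact ⟨i, Finset.mem_erase.2 ⟨hir, hi⟩, le_add_of_le_of_nonneg hij hausdorffDist_nonneg⟩

theorem IsNet.exists_erase_of_minSep_lt (hfin : ∀ i j, hausdorffEDist (f i ∩ B) (f j ∩ B) ≠ ⊤)
    {I : Finset ι} {E : ℝ} (hI : IsNet B f I E) {a b : ι} (ha : a ∈ I) (hb : b ∈ I)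
    (hab : a ≠ b) (hlt : minSep B I f < hausdorffDist (f a ∩ B) (f b ∩ B)) :
    ∃ r ∈ I, r ≠ a ∧ r ≠ b ∧ IsNet B f (I.erase r) (E + minSep B I f) := by
  obtain ⟨i, hi, j, hj, hij, hmin⟩ := exists_minSep_eq (B := B) (f := f) ha hb hab
  by_cases hi' : i ≠ a ∧ i ≠ b
  · rw [hmin, hausdorffDist_comm]
    exact ⟨i, hi, hi'.1, hi'.2, hI.erase (hfin j i) hj hij.symm⟩
  by_cases hj' : j ≠ a ∧ j ≠ b
  · rw [hmin]
    exact ⟨j, hj, hj'.1, hj'.2, hI.erase (hfin i j) hi hij⟩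
  rw [not_and_or, not_not, not_not] at hi' hj'
  rcases hi' with rfl | rfl <;> rcases hj' with rfl | rfl
  · exact absurd rfl hij
  · exact absurd hmin hlt.ne
  · exact absurd (hmin.trans hausdorffDist_comm) hlt.ne
  · exact absurd rfl hij

theorem add_le_two_div_mul {δ x μ : ℝ} (hδ0 : 0 < δ) (hδ1 : δ ≤ 1) (hx : 0 ≤ x)
    (h : δ * μ < x) : x + μ ≤ 2 / δ * x := by
  rw [div_mul_eq_mul_div, le_div_iff₀ hδ0]
  nlinarith

open Finset in
theorem IsNet.exists_le_minSep (hfin : ∀ i j, hausdorffEDist (f i ∩ B) (f j ∩ B) ≠ ⊤)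
    {δ D : ℝ} (hδ0 : 0 < δ) (hδ1 : δ ≤ 1) (hD : 0 ≤ D) {a b : ι} (hab : a ≠ b)
    {I : Finset ι} {E : ℝ} (hI : IsNet B f I E) (ha : a ∈ I) (hb : b ∈ I)
    (hE : (2 / δ) ^ (#I - 2) * (D + E) ≤ δ * hausdorffDist (f a ∩ B) (f b ∩ B)) :
    ∃ J : Finset ι, a ∈ J ∧ b ∈ J ∧ ∃ E', IsNet B f J E' ∧
      D + E' ≤ (2 / δ) ^ (#I - 2) * (D + E) ∧ D + E' ≤ δ * minSep B J f := by
  induction I using Finset.strongInduction generalizing E with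
  | H I ih =>
  have hDE : 0 ≤ D + E := add_nonneg hD (hI.nonneg a)
  have hDE_le : D + E ≤ (2 / δ) ^ (#I - 2) * (D + E) :=
    le_mul_of_one_le_left hDE (one_le_pow₀ (by rw [le_div_iff₀ hδ0]; linarith))
  by_cases hstop : D + E ≤ δ * minSep B I f
  · exact ⟨I, ha, hb, E, hI, hDE_le, hstop⟩
  rw [not_le] at hstop
  have hlt : minSep B I f < hausdorffDist (f a ∩ B) (f b ∩ B) :=
    lt_of_mul_lt_mul_left (hstop.trans_le (hDE_le.trans hE)) hδ0.le
  obtain ⟨r, hr, hra, hrb, hnet⟩ := hI.exists_erase_of_minSep_lt hfin ha hb hab hlt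
  have hcard : #(I.erase r) - 2 + 1 = #I - 2 := by
    have := two_lt_card.2 ⟨a, ha, b, hb, r, hr, hab, hra.symm, hrb.symm⟩
    rw [card_erase_of_mem hr]
    omega
  have hstep : (2 / δ) ^ (#(I.erase r) - 2) * (D + (E + minSep B I f))
      ≤ (2 / δ) ^ (#I - 2) * (D + E) := by
    rw [← hcard, pow_succ, mul_assoc, ← add_assoc]
    exact mul_le_mul_of_nonneg_left (add_le_two_div_mul hδ0 hδ1 hDE hstop) (by positivity)
  obtain ⟨J, haJ, hbJ, E', hJ, hE', hJmin⟩ := ih _ (erase_ssubset hr) hnet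
    (mem_erase.2 ⟨hra.symm, ha⟩) (mem_erase.2 ⟨hrb.symm, hb⟩) (hstep.trans hE)
  exact ⟨J, haJ, hbJ, E', hJ, hE'.trans hstep, hJmin⟩

end Pruning

theorem hausdorffDist_union_le_max {α : Type*} [MetricSpace α] {s₁ s₂ t₁ t₂ : Set α}
    (h₁ : hausdorffEDist s₁ t₁ ≠ ⊤) (h₂ : hausdorffEDist s₂ t₂ ≠ ⊤) :
    hausdorffDist (s₁ ∪ s₂) (t₁ ∪ t₂) ≤ max (hausdorffDist s₁ t₁) (hausdorffDist s₂ t₂) := by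
  rw [hausdorffDist, hausdorffDist, hausdorffDist, ← ENNReal.toReal_max h₁ h₂]
  exact ENNReal.toReal_mono (max_ne_top h₁ h₂) hausdorffEDist_union_le

section Planes

variable {E : Type*} [NormedAddCommGroup E] [InnerProductSpace ℝ E] (V : Submodule ℝ E)

def halfPlane (e : E) : Set E := {x | ∃ v ∈ V, ∃ t : ℝ, 0 ≤ t ∧ x = v + t • e}

def plane (e : E) : Set E := {x | ∃ v ∈ V, ∃ t : ℝ, x = v + t • e}

variable {V} {e : E}

theorem hausdorffEDist_halfPlane_inter_closedBall_ne_top {r : ℝ} (hr : 0 ≤ r) (e e' : E) :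
    hausdorffEDist (halfPlane V e ∩ closedBall 0 r) (halfPlane V e' ∩ closedBall 0 r) ≠ ⊤ := by
  have h0 : ∀ e : E, (0 : E) ∈ halfPlane V e ∩ closedBall 0 r :=
    fun e => ⟨⟨0, V.zero_mem, 0, le_rfl, by simp⟩, mem_closedBall_self hr⟩
  exact hausdorffEDist_ne_top_of_nonempty_of_bounded ⟨0, h0 e⟩ ⟨0, h0 e'⟩
    (isBounded_closedBall.subset Set.inter_subset_right)
    (isBounded_closedBall.subset Set.inter_subset_right)

variable [V.HasOrthogonalProjection]

theorem reflection_add_smul (he : e ∈ Vᗮ) {v : E} (hv : v ∈ V) (t : ℝ) :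
    V.reflection (v + t • e) = v + (-t) • e := by
  rw [map_add, map_smul, V.reflection_mem_subspace_eq_self hv,
    V.reflection_mem_subspace_orthogonalComplement_eq_neg he, smul_neg, neg_smul]

theorem plane_eq_union_reflection (he : e ∈ Vᗮ) :
    plane V e = halfPlane V e ∪ V.reflection '' halfPlane V e := by
  ext x
  constructor
  · rintro ⟨v, hv, t, rfl⟩
    rcases le_or_gt 0 t with ht | ht
    · exact Or.inl ⟨v, hv, t, ht, rfl⟩
    · exact Or.inr ⟨v + (-t) • e, ⟨v, hv, -t, by linarith, rfl⟩,
        by rw [reflection_add_smul he hv, neg_neg]⟩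
  · rintro (⟨v, hv, t, -, rfl⟩ | ⟨-, ⟨v, hv, t, -, rfl⟩, rfl⟩)
    · exact ⟨v, hv, t, rfl⟩
    · exact ⟨v, hv, -t, reflection_add_smul he hv t⟩

theorem plane_inter_closedBall (he : e ∈ Vᗮ) (r : ℝ) :
    plane V e ∩ closedBall 0 r =
      halfPlane V e ∩ closedBall 0 r ∪ V.reflection '' (halfPlane V e ∩ closedBall 0 r) := by
  rw [plane_eq_union_reflection he, Set.union_inter_distrib_right,
    Set.image_inter V.reflection.injective, LinearIsometryEquiv.image_closedBall, map_zero]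

theorem hausdorffDist_plane_le_halfPlane {e' : E} (he : e ∈ Vᗮ) (he' : e' ∈ Vᗮ) {r : ℝ}
    (hr : 0 ≤ r) :
    hausdorffDist (plane V e ∩ closedBall 0 r) (plane V e' ∩ closedBall 0 r) ≤
      hausdorffDist (halfPlane V e ∩ closedBall 0 r) (halfPlane V e' ∩ closedBall 0 r) := by
  have hfin := hausdorffEDist_halfPlane_inter_closedBall_ne_top (V := V) hr e e'
  have hR := V.reflection.isometry
  rw [plane_inter_closedBall he, plane_inter_closedBall he']
  refine (hausdorffDist_union_le_max hfin ?_).trans ?_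
  · rwa [hausdorffEDist_image hR]
  · rw [hausdorffDist_image hR, max_self]

end Planes

open Nat in
theorem two_div_pow_le_zpow_mul_factorial {δ : ℝ} (hδ : 0 < δ) {N : ℕ} (hN : 2 ≤ N) :
    (2 / δ) ^ (N - 2) ≤ δ ^ ((2 : ℤ) - N) * ((N - 1)! : ℝ) := by
  obtain ⟨k, rfl⟩ : ∃ k, N = k + 2 := ⟨N - 2, by omega⟩
  have h2k : (2 : ℝ) ^ k ≤ ((k + 1)! : ℝ) := by
    exact_mod_cast (by simpa [add_comm] using factorial_mul_pow_le_factorial (m := 1) (n := k))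
  have hexp : (2 : ℤ) - ((k + 2 : ℕ) : ℤ) = -(k : ℤ) := by push_cast; ring
  rw [Nat.add_sub_cancel, show k + 2 - 1 = k + 1 by omega, hexp, zpow_neg, zpow_natCast,
    div_pow, div_eq_mul_inv, mul_comm]
  gcongr

theorem pruning_lemma_general
    (m n N : ℕ) (hN : 2 ≤ N)
    (D δ : ℝ) (hD : 0 < D) (hδ0 : 0 < δ) (hδ1 : δ ≤ 1)
    (Γ ε : ℝ)
    (hΓ : Γ = δ ^ ((2 : ℤ) - (N : ℤ)) * ((N - 1).factorial : ℝ))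
    (hε : ε = δ / (Γ + 1))
    (V : Submodule ℝ (EuclideanSpace ℝ (Fin (m + n))))
    (e : Fin N → EuclideanSpace ℝ (Fin (m + n)))
    (heV : ∀ i, ∀ v ∈ V, (inner ℝ (e i) v : ℝ) = 0)
    (H pl : Fin N → Set (EuclideanSpace ℝ (Fin (m + n))))
    (hH : ∀ i, H i = {x | ∃ v ∈ V, ∃ t : ℝ, 0 ≤ t ∧ x = v + t • e i})
    (hpl : ∀ i, pl i = {x | ∃ v ∈ V, ∃ t : ℝ, x = v + t • e i})
    (hDζ : D ≤ ε * maxSep (closedBall 0 1) Finset.univ pl) :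
    ∃ I : Finset (Fin N), 2 ≤ I.card ∧
      (∀ j, ∃ i ∈ I,
        Metric.hausdorffDist (H i ∩ closedBall 0 1) (H j ∩ closedBall 0 1) ≤ Γ * D) ∧
      (∀ j, ∃ i ∈ I,
        D + Metric.hausdorffDist (H i ∩ closedBall 0 1) (H j ∩ closedBall 0 1)
          ≤ δ * minSep (closedBall 0 1) I H) ∧
      maxSep (closedBall 0 1) I pl = maxSep (closedBall 0 1) Finset.univ pl := by
  obtain rfl : H = fun i => halfPlane V (e i) := funext hH
  obtain rfl : pl = fun i => plane V (e i) := funext hpl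
  have he : ∀ i, e i ∈ Vᗮ := fun i => (V.mem_orthogonal' (e i)).2 (heV i)
  obtain ⟨a, -, b, -, hab, hζ⟩ := exists_maxSep_eq (B := closedBall 0 1)
    (f := fun i => plane V (e i)) (Finset.mem_univ ⟨0, by omega⟩)
    (Finset.mem_univ ⟨1, by omega⟩) (by simp [Fin.ext_iff])
  have hΓD : (2 / δ) ^ (N - 2) * D ≤ Γ * D :=
    mul_le_mul_of_nonneg_right (hΓ ▸ two_div_pow_le_zpow_mul_factorial hδ0 hN) hD.le
  have hsep : (2 / δ) ^ ((Finset.univ : Finset (Fin N)).card - 2) * (D + 0) ≤ δ *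
      hausdorffDist (halfPlane V (e a) ∩ closedBall 0 1) (halfPlane V (e b) ∩ closedBall 0 1) := by
    have hΓ1 : 0 < Γ + 1 := by rw [hΓ]; positivity
    rw [hε, hζ, div_mul_eq_mul_div, le_div_iff₀ hΓ1] at hDζ
    rw [Finset.card_univ, Fintype.card_fin, add_zero]
    calc (2 / δ) ^ (N - 2) * D ≤ (Γ + 1) * D := by linarith
      _ ≤ δ * hausdorffDist (plane V (e a) ∩ closedBall 0 1)
          (plane V (e b) ∩ closedBall 0 1) := by linarith
      _ ≤ _ := by gcongr; exact hausdorffDist_plane_le_halfPlane (he a) (he b) zero_le_one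
  obtain ⟨J, haJ, hbJ, E', hJ, hE'Γ, hJmin⟩ := isNet_univ.exists_le_minSep
    (fun i j => hausdorffEDist_halfPlane_inter_closedBall_ne_top zero_le_one (e i) (e j))
    hδ0 hδ1 hD.le hab (Finset.mem_univ a) (Finset.mem_univ b) hsep
  rw [Finset.card_univ, Fintype.card_fin, add_zero] at hE'Γ
  refine ⟨J, Finset.one_lt_card.2 ⟨a, haJ, b, hbJ, hab⟩, fun j => ?_, fun j => ?_, ?_⟩
  · obtain ⟨i, hi, hij⟩ := hJ j
    exact ⟨i, hi, by linarith⟩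
  · obtain ⟨i, hi, hij⟩ := hJ j
    exact ⟨i, hi, by linarith⟩
  · exact le_antisymm (maxSep_le_maxSep_of_subset (Finset.subset_univ J) haJ hbJ hab)
      (hζ.trans_le (hausdorffDist_le_maxSep (B := closedBall 0 1)
        (f := fun i => plane V (e i)) haJ hbJ hab))

/-- **Pruning Lemma.**  `H i` are distinct `m`-dimensional closed half-planes with common
`(m-1)`-dimensional boundary `V`, `pl i` the full planes obtained by reflecting across `V`. -/
theorem pruning_lemma
    (m n q N : ℕ) (hm : 1 ≤ m) (hN : 2 ≤ N) (hNq : N ≤ q)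
    (D δ : ℝ) (hD : 0 < D) (hδ0 : 0 < δ) (hδ1 : δ ≤ 1)
    (Γ ε : ℝ)
    (hΓ : Γ = δ ^ ((2 : ℤ) - (N : ℤ)) * ((N - 1).factorial : ℝ))
    (hε : ε = δ / (Γ + 1))
    (V : Submodule ℝ (EuclideanSpace ℝ (Fin (m + n))))
    (hVdim : Module.finrank ℝ V = m - 1)
    (e : Fin N → EuclideanSpace ℝ (Fin (m + n)))
    (he : ∀ i, e i ≠ 0)
    (heV : ∀ i, ∀ v ∈ V, (inner ℝ (e i) v : ℝ) = 0)
    (H pl : Fin N → Set (EuclideanSpace ℝ (Fin (m + n))))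
    (hH : ∀ i, H i = {x | ∃ v ∈ V, ∃ t : ℝ, 0 ≤ t ∧ x = v + t • e i})
    (hpl : ∀ i, pl i = {x | ∃ v ∈ V, ∃ t : ℝ, x = v + t • e i})
    (hdistinct : ∀ i j, i ≠ j → H i ≠ H j)
    (hDζ : D ≤ ε * maxSep (closedBall 0 1) Finset.univ pl) :
    ∃ I : Finset (Fin N), 2 ≤ I.card ∧
      (∀ j, ∃ i ∈ I,
        Metric.hausdorffDist (H i ∩ closedBall 0 1) (H j ∩ closedBall 0 1) ≤ Γ * D) ∧
      (∀ j, ∃ i ∈ I,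
        D + Metric.hausdorffDist (H i ∩ closedBall 0 1) (H j ∩ closedBall 0 1)
          ≤ δ * minSep (closedBall 0 1) I H) ∧
      maxSep (closedBall 0 1) I pl = maxSep (closedBall 0 1) Finset.univ pl :=
  pruning_lemma_general m n N hN D δ hD hδ0 hδ1 Γ ε hΓ hε V e heV H pl hH hpl hDζ
end

section
/- Let m ≥ 1 be an integer. Suppose H : (0,1] → (0,∞) is differentiable, I : (0,1] → ℝ is nondecreasing, and for every r ∈ (0,1] one has (d/dr) log( H(r) / r^{m−1} ) = 2 I(r) / r. Then for all 0 < s ≤ t ≤ 1, H(s)/s^{m−1} ≤ (s/t)^{2 I(s)} · H(t)/t^{m−1}. -/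
/-!
Set `F r = H r / r^(m-1)`. On `[s, t]` the function `log F - 2 I(s) log` has derivative
`2 (I r - I s) / r ≥ 0` by monotonicity of `I`, so it is nondecreasing; comparing its values
at `s` and `t` and exponentiating gives the bound.
-/

open Set Real

theorem monotoneOn_sub_mul_log_of_hasDerivAt {g a : ℝ → ℝ} {c s t : ℝ} (hs : 0 < s)
    (hg : ∀ r ∈ Icc s t, HasDerivAt g (a r / r) r) (ha : ∀ r ∈ Icc s t, c ≤ a r) :
    MonotoneOn (fun r => g r - c * log r) (Icc s t) := by
  have hderiv : ∀ r ∈ Icc s t, HasDerivAt (fun r => g r - c * log r) ((a r - c) / r) r :=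
    fun r hr => ((hg r hr).sub ((hasDerivAt_log (hs.trans_le hr.1).ne').const_mul c)).congr_deriv
      (by ring)
  refine monotoneOn_of_hasDerivWithinAt_nonneg (convex_Icc s t)
    (fun r hr => (hderiv r hr).continuousAt.continuousWithinAt)
    (fun r hr => (hderiv r (interior_subset hr)).hasDerivWithinAt) fun r hr => ?_
  have hr' := interior_subset hr
  exact div_nonneg (sub_nonneg.mpr (ha r hr')) (hs.trans_le hr'.1).le

theorem le_mul_log_div_add_of_hasDerivAt {g a : ℝ → ℝ} {c s t : ℝ} (hs : 0 < s) (hst : s ≤ t)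
    (hg : ∀ r ∈ Icc s t, HasDerivAt g (a r / r) r) (ha : ∀ r ∈ Icc s t, c ≤ a r) :
    g s ≤ c * log (s / t) + g t := by
  have hmono := monotoneOn_sub_mul_log_of_hasDerivAt hs hg ha
    (left_mem_Icc.mpr hst) (right_mem_Icc.mpr hst) hst
  rw [log_div hs.ne' (hs.trans_le hst).ne']
  linarith

theorem le_rpow_mul_of_log_le_mul_log_add {x y q c : ℝ} (hx : 0 < x) (hy : 0 < y) (hq : 0 < q)
    (h : log x ≤ c * log q + log y) : x ≤ q ^ c * y := by
  rw [rpow_def_of_pos hq, mul_comm (log q), ← exp_log hx, ← exp_log hy, ← exp_add]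
  exact exp_le_exp.mpr h

theorem stmt3_general (m : ℕ) (H I : ℝ → ℝ)
    (hHpos : ∀ r ∈ Ioc (0 : ℝ) 1, 0 < H r)
    (hImono : MonotoneOn I (Ioc (0 : ℝ) 1))
    (hderiv : ∀ r ∈ Ioc (0 : ℝ) 1,
      HasDerivAt (fun ρ : ℝ => Real.log (H ρ / ρ ^ (m - 1))) (2 * I r / r) r) :
    ∀ s t : ℝ, 0 < s → s ≤ t → t ≤ 1 →
      H s / s ^ (m - 1) ≤ (s / t) ^ (2 * I s) * (H t / t ^ (m - 1)) := by
  intro s t hs hst ht1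
  have ht : 0 < t := hs.trans_le hst
  have hIcc : Icc s t ⊆ Ioc 0 1 := fun r hr => ⟨hs.trans_le hr.1, hr.2.trans ht1⟩
  have hsI : s ∈ Ioc (0 : ℝ) 1 := hIcc (left_mem_Icc.mpr hst)
  have htI : t ∈ Ioc (0 : ℝ) 1 := hIcc (right_mem_Icc.mpr hst)
  have hlog := le_mul_log_div_add_of_hasDerivAt (a := fun r => 2 * I r) (c := 2 * I s) hs hst
    (fun r hr => hderiv r (hIcc hr))
    (fun r hr => by linarith [hImono hsI (hIcc hr) hr.1])
  exact le_rpow_mul_of_log_le_mul_log_add (div_pos (hHpos s hsI) (pow_pos hs _))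
    (div_pos (hHpos t htI) (pow_pos ht _)) (div_pos hs ht) hlog

theorem stmt3 (m : ℕ) (hm : 1 ≤ m) (H I : ℝ → ℝ)
    (hHpos : ∀ r ∈ Ioc (0 : ℝ) 1, 0 < H r)
    (hImono : MonotoneOn I (Ioc (0 : ℝ) 1))
    (hderiv : ∀ r ∈ Ioc (0 : ℝ) 1,
      HasDerivAt (fun ρ : ℝ => Real.log (H ρ / ρ ^ (m - 1))) (2 * I r / r) r) :
    ∀ s t : ℝ, 0 < s → s ≤ t → t ≤ 1 →
      H s / s ^ (m - 1) ≤ (s / t) ^ (2 * I s) * (H t / t ^ (m - 1)) :=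
  stmt3_general m H I hHpos hImono hderiv
end

section
/- For every integer m ≥ 1 and every μ ∈ (0,1] there exists a constant C = C(m, μ) > 0 with the following property. For every Lebesgue-measurable set E ⊆ B_1 ⊂ ℝ^m with ℒ^m(E) ≥ μ ℒ^m(B_1), there exist vectors v_1, …, v_m ∈ E forming a basis of ℝ^m such that every v ∈ B_1 can be written as v = ∑_{i=1}^m λ_i v_i with |λ_i| ≤ C for all i. -/
/-!
A set filling a fixed fraction of the unit ball cannot lie in a thin slab `|⟪x, u⟫| ≤ ε`: all
such slabs have the same volume (a reflection carries one normal to another), and this volume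
tends to `0` with `ε`. So `E` has a point at distance `≥ ε` from every proper subspace, and a
greedy choice gives `v i ∈ E`, each at distance `≥ ε` from the span of the later ones. Peeling
off one vector at a time, its coefficient in `w` is at most `‖w‖ / ε` and the remainder has norm
at most `(1 + ε⁻¹) ‖w‖`, whence `C = ε⁻¹ (1 + ε⁻¹) ^ m`.
-/

open Metric MeasureTheory Filter Topology Set
open scoped ENNReal InnerProductSpace

section Slab

variable {V : Type*} [NormedAddCommGroup V] [InnerProductSpace ℝ V]

def unitBallSlab (u : V) (ε : ℝ) : Set V :=
  ball 0 1 ∩ {x | |⟪x, u⟫_ℝ| ≤ ε}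

theorem measurableSet_unitBallSlab [MeasurableSpace V] [OpensMeasurableSpace V] (u : V) (ε : ℝ) :
    MeasurableSet (unitBallSlab u ε) :=
  measurableSet_ball.inter
    (isClosed_le (continuous_id.inner continuous_const).abs continuous_const).measurableSet

theorem preimage_unitBallSlab (f : V ≃ₗᵢ[ℝ] V) (u : V) (ε : ℝ) :
    f ⁻¹' unitBallSlab (f u) ε = unitBallSlab u ε := by
  ext x
  simp [unitBallSlab, f.inner_map_map]

variable [FiniteDimensional ℝ V] [MeasurableSpace V] [BorelSpace V]

theorem volume_unitBallSlab_congr {u u' : V} (h : ‖u‖ = ‖u'‖) (ε : ℝ) :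
    volume (unitBallSlab u ε) = volume (unitBallSlab u' ε) := by
  rw [← preimage_unitBallSlab (Submodule.reflection (ℝ ∙ (u - u'))ᗮ) u ε,
    Submodule.reflection_sub h,
    (LinearIsometryEquiv.measurePreserving _).measure_preimage
      (measurableSet_unitBallSlab u' ε).nullMeasurableSet]

theorem tendsto_volume_unitBallSlab {u : V} (hu : u ≠ 0) :
    Tendsto (fun ε => volume (unitBallSlab u ε)) (𝓝[>] 0) (𝓝 0) := by
  have hmono : ∀ ε δ : ℝ, 0 < ε → ε ≤ δ → unitBallSlab u ε ⊆ unitBallSlab u δ :=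
    fun _ _ _ h _ hx => ⟨hx.1, hx.2.trans h⟩
  have hfin : volume (unitBallSlab u 1) ≠ ∞ :=
    (measure_mono inter_subset_left |>.trans_lt measure_ball_lt_top).ne
  have hinter : (⋂ ε > 0, unitBallSlab u ε) ⊆ (ℝ ∙ u)ᗮ := by
    intro x hx
    simp only [mem_iInter] at hx
    exact Submodule.mem_orthogonal_singleton_iff_inner_left.2
      (abs_nonpos_iff.1 (le_of_forall_gt_imp_ge_of_dense fun ε hε => (hx ε hε).2))
  have hnull : volume (⋂ ε > 0, unitBallSlab u ε) = 0 :=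
    measure_mono_null hinter <| Measure.addHaar_submodule _ _ <|
      mt (Submodule.orthogonal_eq_top_iff _).1 (mt Submodule.span_singleton_eq_bot.1 hu)
  simpa [hnull, Function.comp_def] using tendsto_measure_biInter_gt
    (fun ε _ => (measurableSet_unitBallSlab u ε).nullMeasurableSet) hmono ⟨1, one_pos, hfin⟩

theorem exists_forall_volume_unitBallSlab_lt {T : ℝ≥0∞} (hT : T ≠ 0) :
    ∃ ε > 0, ∀ u : V, ‖u‖ = 1 → volume (unitBallSlab u ε) < T := by
  by_cases h : ∃ u₀ : V, ‖u₀‖ = 1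
  · obtain ⟨u₀, hu₀⟩ := h
    obtain ⟨ε, hlt, hε⟩ := ((tendsto_volume_unitBallSlab (norm_ne_zero_iff.1 (hu₀ ▸ one_ne_zero))
      |>.eventually_lt_const (pos_iff_ne_zero.2 hT)).and self_mem_nhdsWithin).exists
    exact ⟨ε, hε, fun u hu => volume_unitBallSlab_congr (hu.trans hu₀.symm) ε ▸ hlt⟩
  · push Not at h
    exact ⟨1, one_pos, fun u hu => absurd hu (h u)⟩

theorem exists_mem_forall_le_norm_sub {E : Set V} {ε : ℝ} (hE : E ⊆ ball 0 1)
    (hvol : ∀ u : V, ‖u‖ = 1 → volume (unitBallSlab u ε) < volume E)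
    {S : Submodule ℝ V} (hS : S ≠ ⊤) : ∃ x ∈ E, ∀ s ∈ S, ε ≤ ‖x - s‖ := by
  obtain ⟨u', hu'S, hu'⟩ :=
    Submodule.exists_mem_ne_zero_of_ne_bot (mt Submodule.orthogonal_eq_bot_iff.1 hS)
  have hu : ‖‖u'‖⁻¹ • u'‖ = 1 := norm_smul_inv_norm hu'
  by_contra! h
  refine (hvol _ hu).not_ge (measure_mono fun x hx => ⟨hE hx, ?_⟩)
  obtain ⟨s, hs, hxs⟩ := h x hx
  have hsu : ⟪s, ‖u'‖⁻¹ • u'⟫_ℝ = 0 :=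
    Submodule.inner_right_of_mem_orthogonal hs (Submodule.smul_mem _ _ hu'S)
  calc |⟪x, ‖u'‖⁻¹ • u'⟫_ℝ| = |⟪x - s, ‖u'‖⁻¹ • u'⟫_ℝ| := by rw [inner_sub_left, hsu, sub_zero]
    _ ≤ ‖x - s‖ * ‖‖u'‖⁻¹ • u'‖ := abs_real_inner_le_norm _ _
    _ ≤ ε := by rw [hu, mul_one]; exact hxs.le

end Slab

section SpanSeparated

variable {W : Type*} [NormedAddCommGroup W] [NormedSpace ℝ W]

/-- Each vector lies at distance at least `ε` from the span of the vectors after it. -/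
def IsSpanSeparated (ε : ℝ) : {k : ℕ} → (Fin k → W) → Prop
  | 0, _ => True
  | _ + 1, v =>
    (∀ s ∈ Submodule.span ℝ (range (Fin.tail v)), ε ≤ ‖v 0 - s‖) ∧ IsSpanSeparated ε (Fin.tail v)

theorem isSpanSeparated_cons {ε : ℝ} {k : ℕ} {x : W} {v : Fin k → W} :
    IsSpanSeparated ε (Fin.cons x v : Fin (k + 1) → W) ↔
      (∀ s ∈ Submodule.span ℝ (range v), ε ≤ ‖x - s‖) ∧ IsSpanSeparated ε v :=
  Iff.rfl

theorem IsSpanSeparated.linearIndependent {ε : ℝ} (hε : 0 < ε) {k : ℕ} {v : Fin k → W}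
    (hv : IsSpanSeparated ε v) : LinearIndependent ℝ v := by
  induction v using Fin.consInduction with
  | elim0 => exact linearIndependent_empty_type
  | cons x v ih =>
    obtain ⟨hx, hv⟩ := isSpanSeparated_cons.1 hv
    exact linearIndependent_finCons.2
      ⟨ih hv, fun hmem => (hε.trans_le (hx x hmem)).ne' (by simp)⟩

theorem exists_isSpanSeparated [FiniteDimensional ℝ W] {E : Set W} {ε : ℝ}
    (hfar : ∀ S : Submodule ℝ W, S ≠ ⊤ → ∃ x ∈ E, ∀ s ∈ S, ε ≤ ‖x - s‖) :
    ∀ k ≤ Module.finrank ℝ W, ∃ v : Fin k → W, (∀ i, v i ∈ E) ∧ IsSpanSeparated ε v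
  | 0, _ => ⟨Fin.elim0, fun i => i.elim0, trivial⟩
  | k + 1, hk => by
    obtain ⟨v, hvE, hv⟩ := exists_isSpanSeparated hfar k (by omega)
    have hspan : Submodule.span ℝ (range v) ≠ ⊤ := fun htop => by
      have := finrank_range_le_card (R := ℝ) v
      rw [Set.finrank, htop, finrank_top, Fintype.card_fin] at this
      omega
    obtain ⟨x, hxE, hx⟩ := hfar _ hspan
    exact ⟨Fin.cons x v, Fin.forall_fin_succ.2 ⟨hxE, hvE⟩, isSpanSeparated_cons.2 ⟨hx, hv⟩⟩

theorem mul_abs_le_norm_smul_add {ε : ℝ} {S : Submodule ℝ W} {x : W}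
    (hx : ∀ s ∈ S, ε ≤ ‖x - s‖) (c : ℝ) {y : W} (hy : y ∈ S) : ε * |c| ≤ ‖c • x + y‖ := by
  rcases eq_or_ne c 0 with rfl | hc
  · simp
  have hxy : c • x + y = c • (x - (-c⁻¹) • y) := by
    rw [smul_sub, smul_smul, mul_neg, mul_inv_cancel₀ hc, neg_one_smul, sub_neg_eq_add]
  rw [hxy, norm_smul, Real.norm_eq_abs, mul_comm]
  exact mul_le_mul_of_nonneg_left (hx _ (S.smul_mem _ hy)) (abs_nonneg c)

theorem IsSpanSeparated.exists_coeffs_abs_le {ε : ℝ} (hε : 0 < ε) {k : ℕ} {v : Fin k → W}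
    (hv : IsSpanSeparated ε v) (hv₁ : ∀ i, ‖v i‖ ≤ 1) :
    ∀ w ∈ Submodule.span ℝ (range v), ∃ c : Fin k → ℝ,
      (∀ i, |c i| ≤ ε⁻¹ * (1 + ε⁻¹) ^ k * ‖w‖) ∧ w = ∑ i, c i • v i := by
  induction v using Fin.consInduction with
  | elim0 =>
    intro w hw
    rw [range_eq_empty, Submodule.span_empty, Submodule.mem_bot] at hw
    exact ⟨0, fun i => i.elim0, by simp [hw]⟩
  | @cons k x v ih =>
    intro w hw
    obtain ⟨hx, hv⟩ := isSpanSeparated_cons.1 hv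
    rw [Fin.range_cons, Submodule.mem_span_insert] at hw
    obtain ⟨a, y, hy, rfl⟩ := hw
    have hx₁ : ‖x‖ ≤ 1 := hv₁ 0
    have ha : |a| ≤ ε⁻¹ * ‖a • x + y‖ := by
      rw [inv_mul_eq_div, le_div_iff₀' hε]
      exact mul_abs_le_norm_smul_add hx a hy
    have hy' : ‖y‖ ≤ (1 + ε⁻¹) * ‖a • x + y‖ := by
      calc ‖y‖ = ‖(a • x + y) - a • x‖ := by rw [add_sub_cancel_left]
        _ ≤ ‖a • x + y‖ + |a| * ‖x‖ := by
          rw [← Real.norm_eq_abs, ← norm_smul]; exact norm_sub_le _ _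
        _ ≤ ‖a • x + y‖ + ε⁻¹ * ‖a • x + y‖ :=
          add_le_add_right ((mul_le_of_le_one_right (abs_nonneg a) hx₁).trans ha) _
        _ = (1 + ε⁻¹) * ‖a • x + y‖ := by ring
    obtain ⟨c, hc, rfl⟩ := ih hv (fun i => hv₁ i.succ) y hy
    have hgrow : (1 : ℝ) ≤ 1 + ε⁻¹ := by simp [hε.le]
    refine ⟨Fin.cons a c, Fin.forall_fin_succ.2 ⟨?_, fun i => ?_⟩, by simp [Fin.sum_univ_succ]⟩
    · calc |a| ≤ ε⁻¹ * ‖a • x + ∑ i, c i • v i‖ := ha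
        _ ≤ ε⁻¹ * (1 + ε⁻¹) ^ (k + 1) * ‖a • x + ∑ i, c i • v i‖ := by
          gcongr; exact le_mul_of_one_le_right (by positivity) (one_le_pow₀ hgrow)
    · calc |c i| ≤ ε⁻¹ * (1 + ε⁻¹) ^ k * ‖∑ i, c i • v i‖ := hc i
        _ ≤ ε⁻¹ * (1 + ε⁻¹) ^ k * ((1 + ε⁻¹) * ‖a • x + ∑ i, c i • v i‖) := by gcongr
        _ = ε⁻¹ * (1 + ε⁻¹) ^ (k + 1) * ‖a • x + ∑ i, c i • v i‖ := by ring

end SpanSeparated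

theorem stmt13_general (m : ℕ) (μ : ℝ) (hμ : μ ∈ Set.Ioc (0 : ℝ) 1) :
    ∃ C : ℝ, 0 < C ∧
      ∀ E : Set (EuclideanSpace ℝ (Fin m)), MeasurableSet E →
        E ⊆ ball (0 : EuclideanSpace ℝ (Fin m)) 1 →
        ENNReal.ofReal μ * volume (ball (0 : EuclideanSpace ℝ (Fin m)) 1) ≤ volume E →
        ∃ v : Fin m → EuclideanSpace ℝ (Fin m),
          (∀ i, v i ∈ E) ∧ LinearIndependent ℝ v ∧
          ∀ w ∈ ball (0 : EuclideanSpace ℝ (Fin m)) 1,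
            ∃ lam : Fin m → ℝ, (∀ i, |lam i| ≤ C) ∧ w = ∑ i, lam i • v i := by
  have hT : ENNReal.ofReal μ * volume (ball (0 : EuclideanSpace ℝ (Fin m)) 1) ≠ 0 :=
    mul_ne_zero (ENNReal.ofReal_pos.2 hμ.1).ne' (measure_ball_pos _ _ one_pos).ne'
  obtain ⟨ε, hε, hslab⟩ :=
    exists_forall_volume_unitBallSlab_lt (V := EuclideanSpace ℝ (Fin m)) hT
  refine ⟨ε⁻¹ * (1 + ε⁻¹) ^ m, by positivity, fun E _ hE hvol => ?_⟩
  obtain ⟨v, hvE, hv⟩ := exists_isSpanSeparated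
    (fun S hS => exists_mem_forall_le_norm_sub hE (fun u hu => (hslab u hu).trans_le hvol) hS)
    m (by simp)
  have hli := hv.linearIndependent hε
  have hspan : Submodule.span ℝ (range v) = ⊤ := hli.span_eq_top_of_card_eq_finrank' (by simp)
  refine ⟨v, hvE, hli, fun w hw => ?_⟩
  have hw₁ : ‖w‖ ≤ 1 := (mem_ball_zero_iff.1 hw).le
  obtain ⟨c, hc, hwc⟩ := hv.exists_coeffs_abs_le hε (fun i => (mem_ball_zero_iff.1 (hE (hvE i))).le) w
    (hspan ▸ Submodule.mem_top)
  exact ⟨c, fun i => (hc i).trans (mul_le_of_le_one_right (by positivity) hw₁), hwc⟩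

theorem stmt13 (m : ℕ) (hm : 1 ≤ m) (μ : ℝ) (hμ : μ ∈ Set.Ioc (0 : ℝ) 1) :
    ∃ C : ℝ, 0 < C ∧
      ∀ E : Set (EuclideanSpace ℝ (Fin m)), MeasurableSet E →
        E ⊆ ball (0 : EuclideanSpace ℝ (Fin m)) 1 →
        ENNReal.ofReal μ * volume (ball (0 : EuclideanSpace ℝ (Fin m)) 1) ≤ volume E →
        ∃ v : Fin m → EuclideanSpace ℝ (Fin m),
          (∀ i, v i ∈ E) ∧ LinearIndependent ℝ v ∧
          ∀ w ∈ ball (0 : EuclideanSpace ℝ (Fin m)) 1,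
            ∃ lam : Fin m → ℝ, (∀ i, |lam i| ≤ C) ∧ w = ∑ i, lam i • v i :=
  stmt13_general m μ hμ
end
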